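/- For every bounded linear functional φ on the space of σ(p)-nuclear n-linear operators from E_1 × ... × E_n to F, the Borel transform B(φ)(x'_1,...,x'_n)(y) := φ(x'_1 ⊗ ... ⊗ x'_n ⊗ y) defines a quasi-τ(p)-summing n-linear operator from E_1' × ... × E_n' to F' with ‖B(φ)‖_{qτ(p)} ≤ ‖φ‖. -/

import Mathlib

open Filter NormedSpace MeasureTheory
open scoped ENNReal

noncomputable section

variable {n : ℕ} {E : Fin n → Type*} [∀ i, NormedAddCommGroup (E i)] [∀ i, NormedSpace ℝ (E i)]
variable {F : Type*} [NormedAddCommGroup F] [NormedSpace ℝ F]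

/-- Conjugate exponent of `p` as an element of `ℝ≥0∞` (`⊤` when `p = 1`). -/
def conjExp (p : ℝ) : ℝ≥0∞ := if p = 1 then ⊤ else ENNReal.ofReal (p / (p - 1))

/-- The rank-one `n`-linear operator `x'_1 ⊗ ⋯ ⊗ x'_n ⊗ y`. -/
def rankOne (x' : ∀ i, StrongDual ℝ (E i)) (y : F) : ContinuousMultilinearMap ℝ E F :=
  (ContinuousMultilinearMap.mkPiRing ℝ (Fin n) y).compContinuousLinearMap x'

/-- The tail suprema appearing in the definition of a σ(p)-nuclear representation:
`sup_{xᵢ ∈ B_{Eᵢ}, y' ∈ B_{F'}} (∑_{j ≥ m} |x'_{1j}(x_1) ⋯ x'_{nj}(x_n) y'(y_j)|^p)^{1/p}`. -/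
def nucSup (p : ℝ) (x' : ℕ → ∀ i, StrongDual ℝ (E i)) (y : ℕ → F) (m : ℕ) : ℝ≥0∞ :=
  ⨆ (x : ∀ i, E i) (_ : ∀ i, ‖x i‖ ≤ 1) (y' : StrongDual ℝ F) (_ : ‖y'‖ ≤ 1),
    (∑' j : ℕ, ENNReal.ofReal |(∏ i, x' (m + j) i (x i)) * y' (y (m + j))| ^ p) ^ (1 / p)

/-- `A = ∑_j λ_j x'_{1j} ⊗ ⋯ ⊗ x'_{nj} ⊗ y_j` is a σ(p)-nuclear representation of `A`. -/
def IsNucRep (p : ℝ) (A : ContinuousMultilinearMap ℝ E F)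
    (lam : ℕ → ℝ) (x' : ℕ → ∀ i, StrongDual ℝ (E i)) (y : ℕ → F) : Prop :=
  Memℓp lam (conjExp p) ∧
  (∀ v : ∀ i, E i, A v = ∑' j : ℕ, (lam j * ∏ i, x' j i (v i)) • y j) ∧
  nucSup p x' y 0 < ⊤ ∧
  Tendsto (fun m => nucSup p x' y m) atTop (nhds 0)

/-- σ(p)-nuclear multilinear operators. -/
def SigmaNuclear (p : ℝ) (A : ContinuousMultilinearMap ℝ E F) : Prop :=
  ∃ lam x' y, IsNucRep p A lam x' y

/-- The σ(p)-nuclear norm: infimum of `‖(λ_j)‖_{p'} · sup‖⋯‖` over all σ(p)-nuclear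
representations. -/
def nucNorm (p : ℝ) (A : ContinuousMultilinearMap ℝ E F) : ℝ :=
  sInf { r | ∃ lam x' y, ∃ h : Memℓp lam (conjExp p), IsNucRep p A lam x' y ∧
    r = ‖(⟨lam, h⟩ : lp (fun _ : ℕ => ℝ) (conjExp p))‖ * (nucSup p x' y 0).toReal }

/-- The weak sup `sup_{x'ᵢ ∈ B_{Eᵢ'}, y' ∈ B_{F'}} (∑_{j<m} |x'_1(x_{1j}) ⋯ x'_n(x_{nj}) y'(y_j)|^q)^{1/q}`. -/
def qtSup (q : ℝ) (x : ℕ → ∀ i, E i) (y : ℕ → F) (m : ℕ) : ℝ :=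
  ⨆ (x' : ∀ i, {f : StrongDual ℝ (E i) // ‖f‖ ≤ 1}) (y' : {f : StrongDual ℝ F // ‖f‖ ≤ 1}),
    (∑ j ∈ Finset.range m, |(∏ i, (x' i).1 (x j i)) * (y'.1 (y j))| ^ q) ^ (1 / q)

/-- `C` is an admissible constant for the quasi-τ(p;q)-summing inequality for `S`. -/
def QuasiTauBound (p q : ℝ) (S : ContinuousMultilinearMap ℝ E (StrongDual ℝ F)) (C : ℝ) : Prop :=
  ∀ (m : ℕ) (x : ℕ → ∀ i, E i) (y : ℕ → F),
    (∑ j ∈ Finset.range m, |S (x j) (y j)| ^ p) ^ (1 / p) ≤ C * qtSup q x y m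

/-- Quasi-τ(p;q)-summing multilinear operators. -/
def QuasiTauSumming (p q : ℝ) (S : ContinuousMultilinearMap ℝ E (StrongDual ℝ F)) : Prop :=
  ∃ C, 0 ≤ C ∧ QuasiTauBound p q S C

/-- The quasi-τ(p;q)-summing norm: infimum of admissible constants. -/
def quasiTauNorm (p q : ℝ) (S : ContinuousMultilinearMap ℝ E (StrongDual ℝ F)) : ℝ :=
  sInf {C | 0 ≤ C ∧ QuasiTauBound p q S C}

/-- The norm of a linear functional as a functional on the space of σ(p)-nuclear operators. -/
def nucDualNorm (p : ℝ) (φ : ContinuousMultilinearMap ℝ E F →ₗ[ℝ] ℝ) : ℝ :=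
  sInf {c | 0 ≤ c ∧ ∀ A : ContinuousMultilinearMap ℝ E F,
    SigmaNuclear p A → |φ A| ≤ c * nucNorm p A}

lemma rankOne_apply (x' : ∀ i, StrongDual ℝ (E i)) (y : F) (v : ∀ i, E i) :
    rankOne x' y v = (∏ i, x' i (v i)) • y := by
  simp [rankOne]

lemma realSign_mul_self (x : ℝ) : Real.sign x * x = |x| := by
  rcases lt_trichotomy x 0 with h | h | h
  · rw [Real.sign_of_neg h, abs_of_neg h]; ring
  · simp [h]
  · rw [Real.sign_of_pos h, abs_of_pos h]; ring

lemma abs_sign_le_one (x : ℝ) : |Real.sign x| ≤ 1 := by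
  rcases lt_trichotomy x 0 with h | h | h
  · simp [Real.sign_of_neg h]
  · simp [h]
  · simp [Real.sign_of_pos h]

lemma mul_rpow_sub_one {p : ℝ} (hp : 0 < p) {A : ℝ} (hA : 0 ≤ A) :
    A * A ^ (p - 1) = A ^ p := by
  rcases eq_or_lt_of_le hA with h | h
  · rw [← h, Real.zero_rpow hp.ne']; ring
  · have := Real.rpow_add h 1 (p - 1)
    rw [Real.rpow_one] at this
    rw [← this]
    congr 1
    ring


instance ballNonempty (G : Type*) [NormedAddCommGroup G] [NormedSpace ℝ G] :
    Nonempty {f : StrongDual ℝ G // ‖f‖ ≤ 1} := ⟨⟨0, by simp⟩⟩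

lemma absTerm_le (x : ℕ → ∀ i, E i) (y : ℕ → F)
    (x' : ∀ i, {f : StrongDual ℝ (E i) // ‖f‖ ≤ 1}) (y' : {f : StrongDual ℝ F // ‖f‖ ≤ 1}) (j : ℕ) :
    |(∏ i, (x' i).1 (x j i)) * (y'.1 (y j))| ≤ (∏ i, ‖x j i‖) * ‖y j‖ := by
  rw [abs_mul, Finset.abs_prod]
  have h1 : ∏ i, |(x' i).1 (x j i)| ≤ ∏ i, ‖x j i‖ := by
    refine Finset.prod_le_prod (fun i _ => abs_nonneg _) (fun i _ => ?_)
    calc |(x' i).1 (x j i)| ≤ ‖(x' i).1‖ * ‖x j i‖ := (x' i).1.le_opNorm _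
    _ ≤ 1 * ‖x j i‖ := mul_le_mul_of_nonneg_right (x' i).2 (norm_nonneg _)
    _ = ‖x j i‖ := one_mul _
  have h2 : |y'.1 (y j)| ≤ ‖y j‖ := by
    calc |y'.1 (y j)| ≤ ‖y'.1‖ * ‖y j‖ := y'.1.le_opNorm _
    _ ≤ 1 * ‖y j‖ := mul_le_mul_of_nonneg_right y'.2 (norm_nonneg _)
    _ = ‖y j‖ := one_mul _
  exact mul_le_mul h1 h2 (abs_nonneg _) (Finset.prod_nonneg fun i _ => norm_nonneg _)

lemma le_qtSup {q : ℝ} (hq : 0 < q) (x : ℕ → ∀ i, E i) (y : ℕ → F) (m : ℕ)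
    (x' : ∀ i, {f : StrongDual ℝ (E i) // ‖f‖ ≤ 1}) (y' : {f : StrongDual ℝ F // ‖f‖ ≤ 1}) :
    (∑ j ∈ Finset.range m, |(∏ i, (x' i).1 (x j i)) * (y'.1 (y j))| ^ q) ^ (1 / q)
      ≤ qtSup q x y m := by
  set M : ℝ := (∑ j ∈ Finset.range m, ((∏ i, ‖x j i‖) * ‖y j‖) ^ q) ^ (1 / q) with hM
  have hb : ∀ (x'' : ∀ i, {f : StrongDual ℝ (E i) // ‖f‖ ≤ 1}) (y'' : {f : StrongDual ℝ F // ‖f‖ ≤ 1}),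
      (∑ j ∈ Finset.range m, |(∏ i, (x'' i).1 (x j i)) * (y''.1 (y j))| ^ q) ^ (1 / q) ≤ M := by
    intro x'' y''
    refine Real.rpow_le_rpow (Finset.sum_nonneg fun j _ => Real.rpow_nonneg (abs_nonneg _) q)
      (Finset.sum_le_sum fun j _ => Real.rpow_le_rpow (abs_nonneg _) (absTerm_le x y x'' y'' j) hq.le)
      (by positivity)
  refine le_trans (le_ciSup (f := fun y'' : {f : StrongDual ℝ F // ‖f‖ ≤ 1} =>
      (∑ j ∈ Finset.range m, |(∏ i, (x' i).1 (x j i)) * (y''.1 (y j))| ^ q) ^ (1 / q))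
      ⟨M, by rintro r ⟨y'', rfl⟩; exact hb x' y''⟩ y') ?_
  exact le_ciSup (f := fun x'' : ∀ i, {f : StrongDual ℝ (E i) // ‖f‖ ≤ 1} =>
      ⨆ y'' : {f : StrongDual ℝ F // ‖f‖ ≤ 1},
        (∑ j ∈ Finset.range m, |(∏ i, (x'' i).1 (x j i)) * (y''.1 (y j))| ^ q) ^ (1 / q))
      ⟨M, by rintro r ⟨x'', rfl⟩; exact ciSup_le fun y'' => hb x'' y''⟩ x'

lemma qtSup_nonneg {q : ℝ} (hq : 0 < q) (x : ℕ → ∀ i, E i) (y : ℕ → F) (m : ℕ) :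
    0 ≤ qtSup q x y m := by
  have := le_qtSup hq x y m (fun i => ⟨0, by simp⟩) ⟨0, by simp⟩
  simpa [Real.zero_rpow hq.ne', one_div, Real.zero_rpow (inv_ne_zero hq.ne')] using this

lemma qtSup_le {q : ℝ} (hq : 0 < q) (x : ℕ → ∀ i, E i) (y : ℕ → F) (m : ℕ) {M : ℝ}
    (hb : ∀ (x' : ∀ i, {f : StrongDual ℝ (E i) // ‖f‖ ≤ 1}) (y' : {f : StrongDual ℝ F // ‖f‖ ≤ 1}),
      (∑ j ∈ Finset.range m, |(∏ i, (x' i).1 (x j i)) * (y'.1 (y j))| ^ q) ^ (1 / q) ≤ M) :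
    qtSup q x y m ≤ M :=
  ciSup_le fun x' => ciSup_le fun y' => hb x' y'

lemma nucSup_tail {p : ℝ} (hp : 0 < p) (x : ℕ → ∀ i, StrongDual ℝ (E i)) (y : ℕ → F) (m k : ℕ)
    (hk : m ≤ k) : nucSup p x (fun j => if j < m then y j else 0) k = 0 := by
  refine le_antisymm ?_ zero_le
  refine iSup_le fun v => iSup_le fun _ => iSup_le fun y' => iSup_le fun _ => ?_
  have h1 : ∀ j : ℕ,
      ENNReal.ofReal |(∏ i, x (k + j) i (v i)) *
        y' (if k + j < m then y (k + j) else 0)| ^ p = 0 := by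
    intro j
    rw [if_neg (by omega)]
    simp [ENNReal.zero_rpow_of_pos hp]
  simp only [h1, tsum_zero, ENNReal.zero_rpow_of_pos (by positivity : (0:ℝ) < 1 / p), le_refl]

lemma nucSup_zero_le {p : ℝ} (hp : 1 ≤ p) (x : ℕ → ∀ i, StrongDual ℝ (E i)) (y : ℕ → F) (m : ℕ) :
    nucSup p x (fun j => if j < m then y j else 0) 0 ≤ ENNReal.ofReal (qtSup p x y m) := by
  have hp0 : 0 < p := lt_of_lt_of_le one_pos hp
  refine iSup_le fun v => iSup_le fun hv => iSup_le fun y' => iSup_le fun hy' => ?_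
  have h1 : ∀ j : ℕ,
      ENNReal.ofReal |(∏ i, x (0 + j) i (v i)) *
        y' (if 0 + j < m then y (0 + j) else 0)| ^ p =
      if j ∈ Finset.range m then
        ENNReal.ofReal (|(∏ i, x j i (v i)) * y' (y j)| ^ p) else 0 := by
    intro j
    rw [zero_add]
    by_cases hj : j < m
    · rw [if_pos hj, if_pos (Finset.mem_range.2 hj),
        ENNReal.ofReal_rpow_of_nonneg (abs_nonneg _) hp0.le]
    · rw [if_neg hj, if_neg (by simpa using hj)]
      simp [ENNReal.zero_rpow_of_pos hp0]
  simp only [h1]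
  rw [tsum_eq_sum (s := Finset.range m) (fun j hj => if_neg hj)]
  have h2 : ∀ j ∈ Finset.range m, (if j ∈ Finset.range m then
      ENNReal.ofReal (|(∏ i, x j i (v i)) * y' (y j)| ^ p) else 0) =
      ENNReal.ofReal (|(∏ i, x j i (v i)) * y' (y j)| ^ p) := fun j hj => if_pos hj
  rw [Finset.sum_congr rfl h2,
    ← ENNReal.ofReal_sum_of_nonneg (fun j _ => Real.rpow_nonneg (abs_nonneg _) p),
    ENNReal.ofReal_rpow_of_nonneg
      (Finset.sum_nonneg fun j _ => Real.rpow_nonneg (abs_nonneg _) p) (by positivity)]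
  refine ENNReal.ofReal_le_ofReal ?_
  have := le_qtSup hp0 x y m
    (fun i => ⟨inclusionInDoubleDual ℝ (E i) (v i),
      le_trans (double_dual_bound ℝ (E i) (v i)) (hv i)⟩) ⟨y', hy'⟩
  simpa [NormedSpace.dual_def] using this

lemma conjExp_toReal {p : ℝ} (hp : 1 < p) : (conjExp p).toReal = p / (p - 1) := by
  rw [conjExp, if_neg hp.ne', ENNReal.toReal_ofReal (le_of_lt (div_pos (by linarith) (by linarith)))]

lemma conjExp_toReal_pos {p : ℝ} (hp : 1 < p) : 0 < (conjExp p).toReal := by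
  rw [conjExp_toReal hp]; exact div_pos (by linarith) (by linarith)

lemma memℓp_of_support {p : ℝ} (hp : 1 ≤ p) {m : ℕ} {lam : ℕ → ℝ}
    (h0 : ∀ j, m ≤ j → lam j = 0) : Memℓp lam (conjExp p) := by
  rcases eq_or_lt_of_le hp with h1 | h1
  · have hc : conjExp p = ⊤ := by rw [conjExp, if_pos h1.symm]
    rw [hc]
    refine memℓp_infty ⟨∑ j ∈ Finset.range m, |lam j|, ?_⟩
    rintro r ⟨j, rfl⟩
    by_cases hj : j < m
    · exact Finset.single_le_sum (f := fun j => |lam j|) (fun k _ => abs_nonneg _)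
        (Finset.mem_range.2 hj)
    · simp only [Real.norm_eq_abs, h0 j (by omega), abs_zero]
      exact Finset.sum_nonneg fun k _ => abs_nonneg _
  · refine memℓp_gen ?_
    refine summable_of_ne_finset_zero (s := Finset.range m) fun j hj => ?_
    rw [h0 j (by simpa using hj)]
    simp [Real.zero_rpow (conjExp_toReal_pos h1).ne']

lemma lp_norm_le_one {p : ℝ} (hp : 1 ≤ p) {m : ℕ} {lam : ℕ → ℝ}
    (h0 : ∀ j, m ≤ j → lam j = 0) (hmem : Memℓp lam (conjExp p))
    (hinf : p = 1 → ∀ j, |lam j| ≤ 1)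
    (hsum : 1 < p → ∑ j ∈ Finset.range m, |lam j| ^ (p / (p - 1)) ≤ 1) :
    ‖(⟨lam, hmem⟩ : lp (fun _ : ℕ => ℝ) (conjExp p))‖ ≤ 1 := by
  rcases eq_or_lt_of_le hp with h1 | h1
  · have hc : conjExp p = ⊤ := by rw [conjExp, if_pos h1.symm]
    revert hmem
    rw [hc]
    intro hmem
    rw [lp.norm_eq_ciSup]
    exact ciSup_le fun j => by simpa using hinf h1.symm j
  · have hq : 0 < (conjExp p).toReal := conjExp_toReal_pos h1
    rw [lp.norm_eq_tsum_rpow hq]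
    have h2 : ∀ j ∉ Finset.range m,
        ‖(⟨lam, hmem⟩ : lp (fun _ : ℕ => ℝ) (conjExp p)) j‖ ^ (conjExp p).toReal = 0 := by
      intro j hj
      have hl : (⟨lam, hmem⟩ : lp (fun _ : ℕ => ℝ) (conjExp p)) j = lam j := rfl
      rw [hl, h0 j (by simpa using hj)]
      simp [Real.zero_rpow hq.ne']
    rw [tsum_eq_sum h2]
    refine Real.rpow_le_one (Finset.sum_nonneg fun j _ => Real.rpow_nonneg (norm_nonneg _) _)
      ?_ (by positivity)
    refine le_trans (le_of_eq (Finset.sum_congr rfl fun j _ => ?_)) (hsum h1)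
    have hl : (⟨lam, hmem⟩ : lp (fun _ : ℕ => ℝ) (conjExp p)) j = lam j := rfl
    rw [hl, conjExp_toReal h1, Real.norm_eq_abs]

lemma key_lemma {p : ℝ} (hp : 1 ≤ p) (m : ℕ) (lam : ℕ → ℝ) (h0 : ∀ j, m ≤ j → lam j = 0)
    (hmem : Memℓp lam (conjExp p))
    (hnorm : ‖(⟨lam, hmem⟩ : lp (fun _ : ℕ => ℝ) (conjExp p))‖ ≤ 1)
    (x : ℕ → ∀ i, StrongDual ℝ (E i)) (y : ℕ → F) :
    SigmaNuclear p (∑ j ∈ Finset.range m, lam j • rankOne (x j) (y j)) ∧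
    nucNorm p (∑ j ∈ Finset.range m, lam j • rankOne (x j) (y j)) ≤ qtSup p x y m := by
  have hp0 : 0 < p := lt_of_lt_of_le one_pos hp
  set yy : ℕ → F := fun j => if j < m then y j else 0 with hyy
  set A : ContinuousMultilinearMap ℝ E F := ∑ j ∈ Finset.range m, lam j • rankOne (x j) (y j)
    with hA
  have hrep : IsNucRep p A lam x yy := by
    refine ⟨hmem, ?_, ?_, ?_⟩
    · intro v
      rw [tsum_eq_sum (s := Finset.range m) (fun j hj => by
        rw [h0 j (by simpa using hj)]
        simp)]
      rw [hA, ContinuousMultilinearMap.sum_apply]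
      refine Finset.sum_congr rfl fun j hj => ?_
      rw [ContinuousMultilinearMap.smul_apply, rankOne_apply]
      show lam j • (∏ i, (x j i) (v i)) • y j = _ • (if j < m then y j else 0)
      rw [if_pos (Finset.mem_range.1 hj), smul_smul]
    · exact lt_of_le_of_lt (nucSup_zero_le hp x y m) ENNReal.ofReal_lt_top
    · refine tendsto_atTop_of_eventually_const (i₀ := m) fun k hk => ?_
      exact nucSup_tail hp0 x y m k hk
  refine ⟨⟨lam, x, yy, hrep⟩, ?_⟩
  have hmem2 : ‖(⟨lam, hmem⟩ : lp (fun _ : ℕ => ℝ) (conjExp p))‖ * (nucSup p x yy 0).toReal ∈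
      { r | ∃ lam' x' y', ∃ h : Memℓp lam' (conjExp p), IsNucRep p A lam' x' y' ∧
        r = ‖(⟨lam', h⟩ : lp (fun _ : ℕ => ℝ) (conjExp p))‖ * (nucSup p x' y' 0).toReal } :=
    ⟨lam, x, yy, hmem, hrep, rfl⟩
  refine le_trans (csInf_le ⟨0, ?_⟩ hmem2) ?_
  · rintro r ⟨lam', x', y', h', _, rfl⟩
    have : (0:ℝ) ≤ ‖(⟨lam', h'⟩ : lp (fun _ : ℕ => ℝ) (conjExp p))‖ := lp.norm_nonneg' _
    exact mul_nonneg this ENNReal.toReal_nonneg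
  · calc ‖(⟨lam, hmem⟩ : lp (fun _ : ℕ => ℝ) (conjExp p))‖ * (nucSup p x yy 0).toReal
        ≤ 1 * qtSup p x y m := by
          refine mul_le_mul hnorm ?_ ENNReal.toReal_nonneg zero_le_one
          exact ENNReal.toReal_le_of_le_ofReal (qtSup_nonneg hp0 x y m) (nucSup_zero_le hp x y m)
    _ = qtSup p x y m := one_mul _

lemma rankOne_nuclear {p : ℝ} (hp : 1 ≤ p) (x' : ∀ i, StrongDual ℝ (E i)) (y : F) :
    SigmaNuclear p (rankOne x' y) ∧ nucNorm p (rankOne x' y) ≤ (∏ i, ‖x' i‖) * ‖y‖ := by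
  have hp0 : 0 < p := lt_of_lt_of_le one_pos hp
  set lam : ℕ → ℝ := fun j => if j = 0 then 1 else 0 with hlam
  have h0 : ∀ j, 1 ≤ j → lam j = 0 := fun j hj => if_neg (by omega)
  have hmem : Memℓp lam (conjExp p) := memℓp_of_support hp h0
  have hnorm : ‖(⟨lam, hmem⟩ : lp (fun _ : ℕ => ℝ) (conjExp p))‖ ≤ 1 := by
    refine lp_norm_le_one hp h0 hmem (fun _ j => ?_) (fun h1 => ?_)
    · rcases eq_or_ne j 0 with h | h <;> simp [hlam, h]
    · rw [Finset.sum_range_one]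
      simp [hlam, Real.one_rpow]
  have hk := key_lemma hp 1 lam h0 hmem hnorm (fun _ => x') (fun _ => y)
  rw [Finset.sum_range_one] at hk
  have h1 : lam 0 = 1 := rfl
  rw [h1, one_smul] at hk
  refine ⟨hk.1, le_trans hk.2 ?_⟩
  refine qtSup_le hp0 _ _ 1 fun x'' y'' => ?_
  rw [Finset.sum_range_one, one_div, Real.rpow_rpow_inv (abs_nonneg _) hp0.ne']
  exact absTerm_le (fun _ => x') (fun _ => y) x'' y'' 0

lemma prod_update_apply [DecidableEq (Fin n)] (x' : ∀ i, StrongDual ℝ (E i)) (i : Fin n) (w : StrongDual ℝ (E i))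
    (v : ∀ i, E i) :
    ∏ j, (Function.update x' i w j) (v j) =
      w (v i) * ∏ j ∈ Finset.univ \ {i}, x' j (v j) := by
  have h : ∀ j, (Function.update x' i w j) (v j) =
      Function.update (fun k => x' k (v k)) i (w (v i)) j :=
    fun j => Function.apply_update (fun k (g : StrongDual ℝ (E k)) => g (v k)) x' i w j
  simp only [h]
  exact Finset.prod_update_of_mem (Finset.mem_univ i) _ _

lemma rankOne_update_add [DecidableEq (Fin n)] (x' : ∀ i, StrongDual ℝ (E i)) (i : Fin n) (a b : StrongDual ℝ (E i)) (y : F) :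
    rankOne (Function.update x' i (a + b)) y =
      rankOne (Function.update x' i a) y + rankOne (Function.update x' i b) y := by
  ext v
  simp only [ContinuousMultilinearMap.add_apply, rankOne_apply, prod_update_apply,
    ContinuousLinearMap.add_apply, add_mul, add_smul]

lemma rankOne_update_smul [DecidableEq (Fin n)] (x' : ∀ i, StrongDual ℝ (E i)) (i : Fin n) (c : ℝ) (a : StrongDual ℝ (E i))
    (y : F) :
    rankOne (Function.update x' i (c • a)) y = c • rankOne (Function.update x' i a) y := by
  ext v
  simp only [ContinuousMultilinearMap.smul_apply, rankOne_apply, prod_update_apply,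
    ContinuousLinearMap.smul_apply, smul_eq_mul, mul_assoc, smul_smul]

lemma rankOne_add_right (x' : ∀ i, StrongDual ℝ (E i)) (y z : F) :
    rankOne x' (y + z) = rankOne x' y + rankOne x' z := by
  ext v
  simp [rankOne_apply, smul_add]

lemma rankOne_smul_right (x' : ∀ i, StrongDual ℝ (E i)) (c : ℝ) (y : F) :
    rankOne x' (c • y) = c • rankOne x' y := by
  ext v
  simp [rankOne_apply, smul_smul, mul_comm]

theorem borel_transform_quasiTauSumming (p : ℝ) (hp : 1 ≤ p)
    (φ : ContinuousMultilinearMap ℝ E F →ₗ[ℝ] ℝ)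
    (hφ : ∃ c : ℝ, 0 ≤ c ∧ ∀ A : ContinuousMultilinearMap ℝ E F,
      SigmaNuclear p A → |φ A| ≤ c * nucNorm p A) :
    ∃ S : ContinuousMultilinearMap ℝ (fun i => StrongDual ℝ (E i)) (StrongDual ℝ F),
      (∀ (x' : ∀ i, StrongDual ℝ (E i)) (y : F), S x' y = φ (rankOne x' y)) ∧
      QuasiTauSumming p p S ∧ quasiTauNorm p p S ≤ nucDualNorm p φ := by
  obtain ⟨c, hc0, hc⟩ := hφ
  have hp0 : 0 < p := lt_of_lt_of_le one_pos hp
  have hbound : ∀ (x' : ∀ i, StrongDual ℝ (E i)) (y : F),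
      |φ (rankOne x' y)| ≤ c * (∏ i, ‖x' i‖) * ‖y‖ := by
    intro x' y
    calc |φ (rankOne x' y)| ≤ c * nucNorm p (rankOne x' y) := hc _ (rankOne_nuclear hp x' y).1
    _ ≤ c * ((∏ i, ‖x' i‖) * ‖y‖) :=
        mul_le_mul_of_nonneg_left (rankOne_nuclear hp x' y).2 hc0
    _ = c * (∏ i, ‖x' i‖) * ‖y‖ := by ring
  let L : (∀ i, StrongDual ℝ (E i)) → (StrongDual ℝ F) := fun x' =>
    LinearMap.mkContinuous
      { toFun := fun y => φ (rankOne x' y)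
        map_add' := fun y z => by
          show φ (rankOne x' (y + z)) = φ (rankOne x' y) + φ (rankOne x' z)
          rw [rankOne_add_right, map_add]
        map_smul' := fun a y => by
          show φ (rankOne x' (a • y)) = (RingHom.id ℝ) a • φ (rankOne x' y)
          rw [rankOne_smul_right, _root_.map_smul]
          rfl }
      (c * ∏ i, ‖x' i‖)
      (fun y => by simpa using hbound x' y)
  let S0 : MultilinearMap ℝ (fun i => StrongDual ℝ (E i)) (StrongDual ℝ F) :=
  { toFun := L
    map_update_add' := by
      intro _ x' i a b
      ext y
      show φ _ = φ _ + φ _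
      rw [rankOne_update_add, map_add]
    map_update_smul' := by
      intro _ x' i r a
      ext y
      show φ _ = r * φ _
      rw [rankOne_update_smul, _root_.map_smul, smul_eq_mul] }
  have hS0norm : ∀ x', ‖S0 x'‖ ≤ c * ∏ i, ‖x' i‖ := fun x' =>
    ContinuousLinearMap.opNorm_le_bound _
      (mul_nonneg hc0 (Finset.prod_nonneg fun i _ => norm_nonneg _))
      (fun y => hbound x' y)
  let S : ContinuousMultilinearMap ℝ (fun i => StrongDual ℝ (E i)) (StrongDual ℝ F) :=
    MultilinearMap.mkContinuous S0 c hS0norm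
  have hSapply : ∀ (x' : ∀ i, StrongDual ℝ (E i)) (y : F), S x' y = φ (rankOne x' y) :=
    fun _ _ => rfl
  have main : ∀ c', 0 ≤ c' →
      (∀ A : ContinuousMultilinearMap ℝ E F, SigmaNuclear p A → |φ A| ≤ c' * nucNorm p A) →
      QuasiTauBound p p S c' := by
    intro c' hc'0 hc' m x y
    set a : ℕ → ℝ := fun j => S (x j) (y j) with ha
    show (∑ j ∈ Finset.range m, |a j| ^ p) ^ (1 / p) ≤ c' * qtSup p x y m
    by_cases h0 : (∑ j ∈ Finset.range m, |a j| ^ p) = 0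
    · rw [h0, Real.zero_rpow (one_div_pos.2 hp0).ne']
      exact mul_nonneg hc'0 (qtSup_nonneg hp0 x y m)
    · have hsum_nonneg : 0 ≤ ∑ j ∈ Finset.range m, |a j| ^ p :=
        Finset.sum_nonneg fun j _ => Real.rpow_nonneg (abs_nonneg _) p
      have hsum_pos : 0 < ∑ j ∈ Finset.range m, |a j| ^ p :=
        lt_of_le_of_ne hsum_nonneg (Ne.symm h0)
      set t : ℝ := (∑ j ∈ Finset.range m, |a j| ^ p) ^ (1 / p) with hts
      have ht : 0 < t := Real.rpow_pos_of_pos hsum_pos _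
      have htp : t ^ p = ∑ j ∈ Finset.range m, |a j| ^ p := by
        rw [hts, ← Real.rpow_mul hsum_nonneg, one_div_mul_cancel hp0.ne', Real.rpow_one]
      set lam : ℕ → ℝ :=
        fun j => if j < m then Real.sign (a j) * |a j| ^ (p - 1) * t ^ (1 - p) else 0 with hlam
      have h0supp : ∀ j, m ≤ j → lam j = 0 := fun j hj => if_neg (by omega)
      have hinf : p = 1 → ∀ j, |lam j| ≤ 1 := by
        intro hp1 j
        rw [hlam]
        by_cases hj : j < m
        · simp only [if_pos hj, hp1, sub_self, Real.rpow_zero, mul_one]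
          exact abs_sign_le_one _
        · simp [if_neg hj]
      have hsum1 : 1 < p → ∑ j ∈ Finset.range m, |lam j| ^ (p / (p - 1)) ≤ 1 := by
        intro hp1
        have hne : p - 1 ≠ 0 := by linarith
        have habs : ∀ j, j < m → |lam j| = |a j| ^ (p - 1) * t ^ (1 - p) := by
          intro j hj
          rw [hlam]
          simp only [if_pos hj]
          rw [abs_mul, abs_mul, abs_of_nonneg (Real.rpow_nonneg (abs_nonneg _) _),
            abs_of_nonneg (Real.rpow_pos_of_pos ht _).le]
          rcases eq_or_ne (a j) 0 with h | h
          · rw [h, Real.sign_zero, abs_zero, Real.zero_rpow hne]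
            ring
          · rcases lt_trichotomy (a j) 0 with h' | h' | h'
            · rw [Real.sign_of_neg h']
              simp
            · exact absurd h' h
            · rw [Real.sign_of_pos h']
              simp
        have h1 : ∀ j ∈ Finset.range m, |lam j| ^ (p / (p - 1)) = |a j| ^ p * (t ^ p)⁻¹ := by
          intro j hj
          rw [habs j (Finset.mem_range.1 hj),
            Real.mul_rpow (Real.rpow_nonneg (abs_nonneg _) _)
              (Real.rpow_pos_of_pos ht _).le,
            ← Real.rpow_mul (abs_nonneg _), ← Real.rpow_mul ht.le,
            show (p - 1) * (p / (p - 1)) = p by field_simp,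
            show (1 - p) * (p / (p - 1)) = -p by field_simp; ring,
            Real.rpow_neg ht.le]
        rw [Finset.sum_congr rfl h1, ← Finset.sum_mul, ← htp,
          mul_inv_cancel₀ (by positivity : t ^ p ≠ 0)]
      have hmem : Memℓp lam (conjExp p) := memℓp_of_support hp h0supp
      have hnorm : ‖(⟨lam, hmem⟩ : lp (fun _ : ℕ => ℝ) (conjExp p))‖ ≤ 1 :=
        lp_norm_le_one hp h0supp hmem hinf hsum1
      have hkey := key_lemma hp m lam h0supp hmem hnorm x y
      set A : ContinuousMultilinearMap ℝ E F :=
        ∑ j ∈ Finset.range m, lam j • rankOne (x j) (y j) with hA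
      have hφA : φ A = t := by
        rw [hA, map_sum]
        have h2 : ∀ j ∈ Finset.range m,
            φ (lam j • rankOne (x j) (y j)) = |a j| ^ p * t ^ (1 - p) := by
          intro j hj
          rw [_root_.map_smul, smul_eq_mul]
          have h3 : φ (rankOne (x j) (y j)) = a j := (hSapply (x j) (y j)).symm
          rw [h3, hlam]
          simp only [if_pos (Finset.mem_range.1 hj)]
          rw [show Real.sign (a j) * |a j| ^ (p - 1) * t ^ (1 - p) * a j =
            Real.sign (a j) * a j * |a j| ^ (p - 1) * t ^ (1 - p) by ring,
            realSign_mul_self, mul_rpow_sub_one hp0 (abs_nonneg _)]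
        rw [Finset.sum_congr rfl h2, ← Finset.sum_mul, ← htp, ← Real.rpow_add ht,
          show p + (1 - p) = 1 by ring, Real.rpow_one]
      calc t = φ A := hφA.symm
      _ ≤ |φ A| := le_abs_self _
      _ ≤ c' * nucNorm p A := hc' A hkey.1
      _ ≤ c' * qtSup p x y m := mul_le_mul_of_nonneg_left hkey.2 hc'0
  refine ⟨S, hSapply, ⟨c, hc0, main c hc0 hc⟩, ?_⟩
  refine csInf_le_csInf ⟨0, fun r hr => hr.1⟩ ⟨c, hc0, hc⟩ ?_
  rintro c' ⟨hc'0, hc'⟩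
  exact ⟨hc'0, main c' hc'0 hc'⟩

end
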